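/- Reduction of the Stokes system to a weakly coupled elliptic system: Let Ω ⊂ ℝ² be a domain, μ ∈ C²(Ω) with μ > 0, and let w = (w₁,w₂) ∈ C²(Ω;ℝ²) and f ∈ C³(Ω;ℝ) satisfy in Ω: (i) Δf = div w; (ii) μ Δw₁ + 2 ∂_{x₁}μ ∂_{x₁}w₁ + ∂_{x₂}μ (∂_{x₂}w₁ + ∂_{x₁}w₂) + ∂_{x₁}μ · div w + 2 ∂²_{x₁x₁}μ ∂_{x₁}f + 2 ∂²_{x₂x₁}μ ∂_{x₂}f = 0; (iii) μ Δw₂ + 2 ∂_{x₂}μ ∂_{x₂}w₂ + ∂_{x₁}μ (∂_{x₂}w₁ + ∂_{x₁}w₂) + ∂_{x₂}μ · div w + 2 ∂²_{x₂x₂}μ ∂_{x₂}f + 2 ∂²_{x₁x₂}μ ∂_{x₁}f = 0. Define u = w − ∇f and p = ½ μ Δf + ∂_{x₁}μ ∂_{x₁}f + ∂_{x₂}μ ∂_{x₂}f. Then div u = 0 in Ω and for k = 1,2: ½ Σ_{j=1}² ∂_{x_j}( μ (∂_{x_j}u_k + ∂_{x_k}u_j) ) + ∂_{x_k}p = 0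 in Ω, i.e. (u,p) is a solution of the stationary Stokes equations with viscosity μ. -/

import Mathlib

/-!
With `u = w - ∇f` one has `div u = div w - Δf = 0` by (i). For the momentum equations, expanding
`½ Σ_j ∂_j(μ(∂_j u_k + ∂_k u_j)) + ∂_k p` by the product rule and using `∂_k Δf = ∂_k div w`
(equation (i) differentiated) together with the symmetry of second and third derivatives leaves
exactly half the left-hand side of (ii), resp. (iii). The computation only involves derivatives in
two directions `a, b` and their commutation, so it is carried out once for arbitrary directions in a
real normed space; the two momentum equations are its instances `(a, b) = (e₁, e₂)` and `(e₂, e₁)`.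
-/

open Set

noncomputable section

/-- Partial derivative `∂/∂x₁`. -/
def pd1 (f : ℝ × ℝ → ℝ) : ℝ × ℝ → ℝ := fun x => fderiv ℝ f x (1, 0)

/-- Partial derivative `∂/∂x₂`. -/
def pd2 (f : ℝ × ℝ → ℝ) : ℝ × ℝ → ℝ := fun x => fderiv ℝ f x (0, 1)

/-- The velocity component `u₁ = w₁ − ∂₁ f`. -/
def su1 (w1 f : ℝ × ℝ → ℝ) : ℝ × ℝ → ℝ := fun x => w1 x - pd1 f x

/-- The velocity component `u₂ = w₂ − ∂₂ f`. -/
def su2 (w2 f : ℝ × ℝ → ℝ) : ℝ × ℝ → ℝ := fun x => w2 x - pd2 f x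

/-- The pressure `p = ½ μ Δf + ∂₁μ ∂₁f + ∂₂μ ∂₂f`. -/
def sp (μ f : ℝ × ℝ → ℝ) : ℝ × ℝ → ℝ :=
  fun x => μ x * (pd1 (pd1 f) x + pd2 (pd2 f) x) / 2
    + pd1 μ x * pd1 f x + pd2 μ x * pd2 f x

open Filter Topology

def dirDeriv {E : Type*} [NormedAddCommGroup E] [NormedSpace ℝ E] (v : E) (g : E → ℝ) : E → ℝ :=
  fun x => fderiv ℝ g x v

local notation "∂[" v "]" => dirDeriv v

section DirDeriv

variable {E : Type*} [NormedAddCommGroup E] [NormedSpace ℝ E] {g h : E → ℝ} {u v w x : E}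

theorem Filter.EventuallyEq.dirDeriv_eq (hgh : g =ᶠ[𝓝 x] h) : ∂[v] g x = ∂[v] h x := by
  simp only [dirDeriv, hgh.fderiv_eq]

theorem dirDeriv_add (hg : DifferentiableAt ℝ g x) (hh : DifferentiableAt ℝ h x) :
    ∂[v] (fun y => g y + h y) x = ∂[v] g x + ∂[v] h x := by
  simp [dirDeriv, fderiv_fun_add hg hh]

theorem dirDeriv_sub (hg : DifferentiableAt ℝ g x) (hh : DifferentiableAt ℝ h x) :
    ∂[v] (fun y => g y - h y) x = ∂[v] g x - ∂[v] h x := by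
  simp [dirDeriv, fderiv_fun_sub hg hh]

theorem dirDeriv_mul (hg : DifferentiableAt ℝ g x) (hh : DifferentiableAt ℝ h x) :
    ∂[v] (fun y => g y * h y) x = ∂[v] g x * h x + g x * ∂[v] h x := by
  simp only [dirDeriv, fderiv_fun_mul hg hh, add_apply, smul_apply,
    smul_eq_mul]
  ring

theorem dirDeriv_div_const (hg : DifferentiableAt ℝ g x) (c : ℝ) :
    ∂[v] (fun y => g y / c) x = ∂[v] g x / c := by
  simp [dirDeriv, div_eq_mul_inv, fderiv_mul_const hg, mul_comm]

theorem ContDiffAt.dirDeriv {m n : WithTop ℕ∞} (hg : ContDiffAt ℝ n g x) (hmn : m + 1 ≤ n) :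
    ContDiffAt ℝ m (∂[v] g) x :=
  (hg.fderiv_right hmn).clm_apply contDiffAt_const

theorem ContDiffAt.differentiableAt_dirDeriv (hg : ContDiffAt ℝ 2 g x) :
    DifferentiableAt ℝ (∂[v] g) x :=
  (hg.dirDeriv (m := 1) (by norm_num)).differentiableAt one_ne_zero

theorem dirDeriv_comm (hg : ContDiffAt ℝ 2 g x) : ∂[u] (∂[v] g) x = ∂[v] (∂[u] g) x := by
  have hd : DifferentiableAt ℝ (fderiv ℝ g) x :=
    (hg.fderiv_right (m := 1) le_rfl).differentiableAt one_ne_zero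
  change fderiv ℝ (fun y => fderiv ℝ g y v) x u = fderiv ℝ (fun y => fderiv ℝ g y u) x v
  simp only [fderiv_clm_apply hd (differentiableAt_const _)]
  simpa using hg.isSymmSndFDerivAt (by simp) u v

theorem dirDeriv_dirDeriv_dirDeriv_comm (hg : ContDiffAt ℝ 3 g x) :
    ∂[u] (∂[u] (∂[v] g)) x = ∂[v] (∂[u] (∂[u] g)) x := by
  have hcomm : ∂[u] (∂[v] g) =ᶠ[𝓝 x] ∂[v] (∂[u] g) :=
    (hg.eventually (by simp)).mono fun y hy => dirDeriv_comm (hy.of_le (by norm_num))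
  rw [hcomm.dirDeriv_eq, dirDeriv_comm (hg.dirDeriv (by norm_num))]

theorem dirDeriv_dirDeriv_sub (hg : ContDiffAt ℝ 2 g x) (hh : ContDiffAt ℝ 2 h x) :
    ∂[u] (∂[v] (fun y => g y - h y)) x = ∂[u] (∂[v] g) x - ∂[u] (∂[v] h) x := by
  have hsub : ∂[v] (fun y => g y - h y) =ᶠ[𝓝 x] fun y => ∂[v] g y - ∂[v] h y :=
    ((hg.eventually (by simp)).and (hh.eventually (by simp))).mono fun y hy =>
      dirDeriv_sub (hy.1.differentiableAt two_ne_zero) (hy.2.differentiableAt two_ne_zero)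
  rw [hsub.dirDeriv_eq, dirDeriv_sub hg.differentiableAt_dirDeriv hh.differentiableAt_dirDeriv]

theorem dirDeriv_mul_dirDeriv_add_dirDeriv {μ : E → ℝ} (hμ : DifferentiableAt ℝ μ x)
    (hg : ContDiffAt ℝ 2 g x) (hh : ContDiffAt ℝ 2 h x) :
    ∂[u] (fun y => μ y * (∂[v] g y + ∂[w] h y)) x =
      ∂[u] μ x * (∂[v] g x + ∂[w] h x) + μ x * (∂[u] (∂[v] g) x + ∂[u] (∂[w] h) x) := by
  have hg₁ : DifferentiableAt ℝ (∂[v] g) x := hg.differentiableAt_dirDeriv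
  have hh₁ : DifferentiableAt ℝ (∂[w] h) x := hh.differentiableAt_dirDeriv
  rw [dirDeriv_mul hμ (hg₁.fun_add hh₁), dirDeriv_add hg₁ hh₁]

end DirDeriv

section Stokes

variable {E : Type*} [NormedAddCommGroup E] [NormedSpace ℝ E] {a b c x : E} {μ wa wb f : E → ℝ}

def stokesPressure (a b : E) (μ f : E → ℝ) : E → ℝ :=
  fun x => μ x * (∂[a] (∂[a] f) x + ∂[b] (∂[b] f) x) / 2 + ∂[a] μ x * ∂[a] f x
    + ∂[b] μ x * ∂[b] f x

theorem stokesPressure_comm : stokesPressure a b μ f = stokesPressure b a μ f :=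
  funext fun x => by simp only [stokesPressure]; ring

theorem dirDeriv_stokesPressure (hμ : ContDiffAt ℝ 2 μ x) (hf : ContDiffAt ℝ 3 f x) :
    ∂[c] (stokesPressure a b μ f) x =
      (∂[c] μ x * (∂[a] (∂[a] f) x + ∂[b] (∂[b] f) x)
          + μ x * (∂[c] (∂[a] (∂[a] f)) x + ∂[c] (∂[b] (∂[b] f)) x)) / 2
        + (∂[c] (∂[a] μ) x * ∂[a] f x + ∂[a] μ x * ∂[c] (∂[a] f) x)
        + (∂[c] (∂[b] μ) x * ∂[b] f x + ∂[b] μ x * ∂[c] (∂[b] f) x) := by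
  have hf₂ : ContDiffAt ℝ 2 f x := hf.of_le (by norm_num)
  have hμ₁ : DifferentiableAt ℝ μ x := hμ.differentiableAt two_ne_zero
  have hμa : DifferentiableAt ℝ (∂[a] μ) x := hμ.differentiableAt_dirDeriv
  have hμb : DifferentiableAt ℝ (∂[b] μ) x := hμ.differentiableAt_dirDeriv
  have hfa : DifferentiableAt ℝ (∂[a] f) x := hf₂.differentiableAt_dirDeriv
  have hfb : DifferentiableAt ℝ (∂[b] f) x := hf₂.differentiableAt_dirDeriv
  have hfaa : DifferentiableAt ℝ (∂[a] (∂[a] f)) x :=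
    (hf.dirDeriv (m := 2) (by norm_num)).differentiableAt_dirDeriv
  have hfbb : DifferentiableAt ℝ (∂[b] (∂[b] f)) x :=
    (hf.dirDeriv (m := 2) (by norm_num)).differentiableAt_dirDeriv
  unfold stokesPressure
  simp (disch := fun_prop) only [dirDeriv_add, dirDeriv_mul, dirDeriv_div_const]

theorem stokes_momentum_of_reduced (hμ : ContDiffAt ℝ 2 μ x) (hwa : ContDiffAt ℝ 2 wa x)
    (hwb : ContDiffAt ℝ 2 wb x) (hf : ContDiffAt ℝ 3 f x)
    (hdiv : ∀ᶠ y in 𝓝 x, ∂[a] (∂[a] f) y + ∂[b] (∂[b] f) y = ∂[a] wa y + ∂[b] wb y)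
    (hred : μ x * (∂[a] (∂[a] wa) x + ∂[b] (∂[b] wa) x) + 2 * ∂[a] μ x * ∂[a] wa x
        + ∂[b] μ x * (∂[b] wa x + ∂[a] wb x) + ∂[a] μ x * (∂[a] wa x + ∂[b] wb x)
        + 2 * ∂[a] (∂[a] μ) x * ∂[a] f x + 2 * ∂[b] (∂[a] μ) x * ∂[b] f x = 0) :
    (1 / 2) * (∂[a] (fun y => μ y * (∂[a] (fun z => wa z - ∂[a] f z) y
          + ∂[a] (fun z => wa z - ∂[a] f z) y)) x
        + ∂[b] (fun y => μ y * (∂[b] (fun z => wa z - ∂[a] f z) y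
          + ∂[a] (fun z => wb z - ∂[b] f z) y)) x)
      + ∂[a] (stokesPressure a b μ f) x = 0 := by
  have hμ₁ : DifferentiableAt ℝ μ x := hμ.differentiableAt two_ne_zero
  have hf₂ : ContDiffAt ℝ 2 f x := hf.of_le (by norm_num)
  have hfa : ContDiffAt ℝ 2 (∂[a] f) x := hf.dirDeriv (by norm_num)
  have hfb : ContDiffAt ℝ 2 (∂[b] f) x := hf.dirDeriv (by norm_num)
  have hdiv_a : ∂[a] (∂[a] (∂[a] f)) x + ∂[a] (∂[b] (∂[b] f)) x
      = ∂[a] (∂[a] wa) x + ∂[a] (∂[b] wb) x := by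
    simpa only [dirDeriv_add hfa.differentiableAt_dirDeriv hfb.differentiableAt_dirDeriv,
      dirDeriv_add hwa.differentiableAt_dirDeriv hwb.differentiableAt_dirDeriv]
      using Filter.EventuallyEq.dirDeriv_eq (v := a) hdiv
  rw [dirDeriv_mul_dirDeriv_add_dirDeriv hμ₁ (hwa.sub hfa) (hwa.sub hfa),
    dirDeriv_mul_dirDeriv_add_dirDeriv hμ₁ (hwa.sub hfa) (hwb.sub hfb),
    dirDeriv_stokesPressure hμ hf]
  simp only [dirDeriv_sub (hwa.differentiableAt two_ne_zero) (hfa.differentiableAt two_ne_zero),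
    dirDeriv_sub (hwb.differentiableAt two_ne_zero) (hfb.differentiableAt two_ne_zero),
    dirDeriv_dirDeriv_sub hwa hfa, dirDeriv_dirDeriv_sub hwb hfb]
  rw [dirDeriv_comm (u := b) (v := a) hf₂, dirDeriv_comm (u := b) (v := a) hwb,
    dirDeriv_comm (u := a) (v := b) hμ, dirDeriv_dirDeriv_dirDeriv_comm (u := b) (v := a) hf,
    dirDeriv_comm (u := b) (v := a) hfb]
  linear_combination (1 / 2 : ℝ) * hred + (∂[a] μ x / 2) * hdiv.self_of_nhds - (μ x / 2) * hdiv_a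

end Stokes

theorem pd1_eq_dirDeriv (g : ℝ × ℝ → ℝ) : pd1 g = ∂[(1, 0)] g := rfl

theorem pd2_eq_dirDeriv (g : ℝ × ℝ → ℝ) : pd2 g = ∂[(0, 1)] g := rfl

theorem sp_eq_stokesPressure (μ f : ℝ × ℝ → ℝ) : sp μ f = stokesPressure (1, 0) (0, 1) μ f := rfl

theorem stokes_reduction_general
    (Ω : Set (ℝ × ℝ)) (hopen : IsOpen Ω)
    (μ w1 w2 f : ℝ × ℝ → ℝ)
    (hμ : ContDiffOn ℝ 2 μ Ω)
    (hw1 : ContDiffOn ℝ 2 w1 Ω) (hw2 : ContDiffOn ℝ 2 w2 Ω)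
    (hf : ContDiffOn ℝ 3 f Ω)
    (heq1 : ∀ x ∈ Ω, pd1 (pd1 f) x + pd2 (pd2 f) x = pd1 w1 x + pd2 w2 x)
    (heq2 : ∀ x ∈ Ω,
      μ x * (pd1 (pd1 w1) x + pd2 (pd2 w1) x)
        + 2 * pd1 μ x * pd1 w1 x + pd2 μ x * (pd2 w1 x + pd1 w2 x)
        + pd1 μ x * (pd1 w1 x + pd2 w2 x)
        + 2 * pd1 (pd1 μ) x * pd1 f x + 2 * pd2 (pd1 μ) x * pd2 f x = 0)
    (heq3 : ∀ x ∈ Ω,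
      μ x * (pd1 (pd1 w2) x + pd2 (pd2 w2) x)
        + 2 * pd2 μ x * pd2 w2 x + pd1 μ x * (pd2 w1 x + pd1 w2 x)
        + pd2 μ x * (pd1 w1 x + pd2 w2 x)
        + 2 * pd2 (pd2 μ) x * pd2 f x + 2 * pd1 (pd2 μ) x * pd1 f x = 0) :
    (∀ x ∈ Ω, pd1 (su1 w1 f) x + pd2 (su2 w2 f) x = 0) ∧
    (∀ x ∈ Ω,
      (1 / 2) * (pd1 (fun y => μ y * (pd1 (su1 w1 f) y + pd1 (su1 w1 f) y)) x
          + pd2 (fun y => μ y * (pd2 (su1 w1 f) y + pd1 (su2 w2 f) y)) x)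
        + pd1 (sp μ f) x = 0) ∧
    (∀ x ∈ Ω,
      (1 / 2) * (pd1 (fun y => μ y * (pd1 (su2 w2 f) y + pd2 (su1 w1 f) y)) x
          + pd2 (fun y => μ y * (pd2 (su2 w2 f) y + pd2 (su2 w2 f) y)) x)
        + pd2 (sp μ f) x = 0) := by
  unfold su1 su2
  simp only [sp_eq_stokesPressure, pd1_eq_dirDeriv, pd2_eq_dirDeriv] at *
  refine ⟨?_, ?_, ?_⟩ <;> intro x hx <;>
    obtain ⟨hμx, hw1x, hw2x, hfx⟩ : ContDiffAt ℝ 2 μ x ∧ ContDiffAt ℝ 2 w1 x ∧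
        ContDiffAt ℝ 2 w2 x ∧ ContDiffAt ℝ 3 f x :=
      ⟨hμ.contDiffAt (hopen.mem_nhds hx), hw1.contDiffAt (hopen.mem_nhds hx),
        hw2.contDiffAt (hopen.mem_nhds hx), hf.contDiffAt (hopen.mem_nhds hx)⟩
  · have hf₂ : ContDiffAt ℝ 2 f x := hfx.of_le (by norm_num)
    rw [dirDeriv_sub (hw1x.differentiableAt two_ne_zero) hf₂.differentiableAt_dirDeriv,
      dirDeriv_sub (hw2x.differentiableAt two_ne_zero) hf₂.differentiableAt_dirDeriv]
    linarith [heq1 x hx]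
  · exact stokes_momentum_of_reduced hμx hw1x hw2x hfx (eventually_of_mem (hopen.mem_nhds hx) heq1)
      (heq2 x hx)
  · have h := stokes_momentum_of_reduced hμx hw2x hw1x hfx (a := (0, 1)) (b := (1, 0))
      (eventually_of_mem (hopen.mem_nhds hx) fun y hy => by linarith [heq1 y hy])
      (by linear_combination heq3 x hx)
    rw [stokesPressure_comm] at h
    linarith

/-- **Reduction of the Stokes system to a weakly coupled elliptic system**
(Proposition 5.1): if `(w, f)` solves the reduced system (i)–(iii), then
`(u, p) = (w − ∇f, ½μΔf + (∇μ, ∇f))` solves the stationary Stokes equations: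
`div u = 0` and `½ Σ_j ∂_j(μ(∂_j u_k + ∂_k u_j)) + ∂_k p = 0` for `k = 1, 2`. -/
theorem stokes_reduction
    (Ω : Set (ℝ × ℝ)) (hopen : IsOpen Ω) (hconn : IsConnected Ω)
    (μ w1 w2 f : ℝ × ℝ → ℝ)
    (hμ : ContDiffOn ℝ 2 μ Ω) (hμpos : ∀ x ∈ Ω, 0 < μ x)
    (hw1 : ContDiffOn ℝ 2 w1 Ω) (hw2 : ContDiffOn ℝ 2 w2 Ω)
    (hf : ContDiffOn ℝ 3 f Ω)
    (heq1 : ∀ x ∈ Ω, pd1 (pd1 f) x + pd2 (pd2 f) x = pd1 w1 x + pd2 w2 x)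
    (heq2 : ∀ x ∈ Ω,
      μ x * (pd1 (pd1 w1) x + pd2 (pd2 w1) x)
        + 2 * pd1 μ x * pd1 w1 x + pd2 μ x * (pd2 w1 x + pd1 w2 x)
        + pd1 μ x * (pd1 w1 x + pd2 w2 x)
        + 2 * pd1 (pd1 μ) x * pd1 f x + 2 * pd2 (pd1 μ) x * pd2 f x = 0)
    (heq3 : ∀ x ∈ Ω,
      μ x * (pd1 (pd1 w2) x + pd2 (pd2 w2) x)
        + 2 * pd2 μ x * pd2 w2 x + pd1 μ x * (pd2 w1 x + pd1 w2 x)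
        + pd2 μ x * (pd1 w1 x + pd2 w2 x)
        + 2 * pd2 (pd2 μ) x * pd2 f x + 2 * pd1 (pd2 μ) x * pd1 f x = 0) :
    (∀ x ∈ Ω, pd1 (su1 w1 f) x + pd2 (su2 w2 f) x = 0) ∧
    (∀ x ∈ Ω,
      (1 / 2) * (pd1 (fun y => μ y * (pd1 (su1 w1 f) y + pd1 (su1 w1 f) y)) x
          + pd2 (fun y => μ y * (pd2 (su1 w1 f) y + pd1 (su2 w2 f) y)) x)
        + pd1 (sp μ f) x = 0) ∧
    (∀ x ∈ Ω,
      (1 / 2) * (pd1 (fun y => μ y * (pd1 (su2 w2 f) y + pd2 (su1 w1 f) y)) x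
          + pd2 (fun y => μ y * (pd2 (su2 w2 f) y + pd2 (su2 w2 f) y)) x)
        + pd2 (sp μ f) x = 0) :=
  stokes_reduction_general Ω hopen μ w1 w2 f hμ hw1 hw2 hf heq1 heq2 heq3

end
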